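/- Let D be an integral domain with quotient field K, A a finitely generated torsion-free D-algebra, B = A ⊗_D K, with A ∩ K = D under the canonical embeddings into B. Suppose A is generated by units as an algebra over its center, and let S ⊆ A be closed under conjugation by units of A (u s u^{-1} ∈ S whenever s ∈ S and u is a unit of A). Then Int^r_B(S,A) is closed under multiplication, i.e., S is a right ringset. -/

import Mathlib

/-!
Right evaluation is not multiplicative, but `(F * G)(s) = (F * G(s))(s)`. So it suffices that
multiplying the coefficients of an integer-valued `F` on the right by any `a ∈ A` keeps it
integer-valued. Such `a` form a subring of `A`, and `a` belongs to it as soon as every `s ∈ S`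
satisfies `a * s = t * a` for some `t ∈ S`, because then `(F * a)(s) = F(t) * a`. Central
elements (`t = s`) and units `u` (`t = u s u⁻¹ ∈ S`) qualify, and they generate `A`.
-/

open Polynomial TensorProduct

/-- The set `Int^r_B(S,A)` of right integer-valued polynomials on `S ⊆ A`, where
`B = A ⊗_D K` and `A` is embedded in `B` via `a ↦ a ⊗ 1`.  Right evaluation is
Mathlib's `Polynomial.eval`. -/
def IntRight (D K A : Type*) [CommRing D] [Field K] [Algebra D K]
    [Ring A] [Algebra D A] (S : Set A) : Set (A ⊗[D] K)[X] :=
  {F : (A ⊗[D] K)[X] | ∀ s ∈ S,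
    F.eval (Algebra.TensorProduct.includeLeftRingHom (R := D) (B := K) s) ∈
      Set.range (Algebra.TensorProduct.includeLeftRingHom (R := D) (A := A) (B := K))}

section Eval

variable {R : Type*} [Semiring R]

lemma Polynomial.eval_mul_C_of_semiconjBy (F : R[X]) {c s t : R} (h : SemiconjBy c s t) :
    (F * C c).eval s = F.eval t * c := by
  induction F using Polynomial.induction_on' with
  | add p q hp hq => rw [add_mul, eval_add, eval_add, hp, hq, add_mul]
  | monomial n a =>
    rw [monomial_mul_C, eval_monomial, eval_monomial, mul_assoc, (h.pow_right n).eq, mul_assoc]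

lemma Polynomial.eval_mul_eq_eval_mul_C_eval (F G : R[X]) (s : R) :
    (F * G).eval s = (F * C (G.eval s)).eval s := by
  induction F using Polynomial.induction_on' with
  | add p q hp hq => rw [add_mul, add_mul, eval_add, eval_add, hp, hq]
  | monomial n a =>
    rw [← C_mul_X_pow_eq_monomial, mul_assoc, X_pow_mul, ← mul_assoc, eval_mul_X_pow,
      mul_assoc, X_pow_mul, ← mul_assoc, eval_mul_X_pow, eval_C_mul, eval_C_mul, eval_C]

end Eval

namespace RingHom

variable {A B : Type*} [Ring A] [Ring B] (φ : A →+* B) (S : Set A)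

def intValued : AddSubgroup B[X] where
  carrier := {F | ∀ s ∈ S, F.eval (φ s) ∈ Set.range φ}
  zero_mem' _ _ := ⟨0, by simp⟩
  add_mem' hF hG s hs := by
    obtain ⟨a, ha⟩ := hF s hs
    obtain ⟨b, hb⟩ := hG s hs
    exact ⟨a + b, by rw [eval_add, map_add, ha, hb]⟩
  neg_mem' hF s hs := by
    obtain ⟨a, ha⟩ := hF s hs
    exact ⟨-a, by rw [eval_neg, map_neg, ha]⟩

def intValuedRightCoeffs : Subring A where
  carrier := {a | ∀ F ∈ φ.intValued S, F * C (φ a) ∈ φ.intValued S}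
  one_mem' F hF := by rwa [map_one, C_1, mul_one]
  mul_mem' ha hb F hF := by
    rw [map_mul, C_mul, ← mul_assoc]
    exact hb _ (ha F hF)
  zero_mem' F _ := by
    rw [map_zero, C_0, mul_zero]
    exact zero_mem _
  add_mem' ha hb F hF := by
    rw [map_add, C_add, mul_add]
    exact add_mem (ha F hF) (hb F hF)
  neg_mem' ha F hF := by
    rw [map_neg, C_neg, mul_neg]
    exact neg_mem (ha F hF)

variable {φ S}

lemma mem_intValuedRightCoeffs_of_semiconjBy {a : A}
    (h : ∀ s ∈ S, ∃ t ∈ S, SemiconjBy a s t) : a ∈ φ.intValuedRightCoeffs S := by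
  intro F hF s hs
  obtain ⟨t, ht, hst⟩ := h s hs
  obtain ⟨b, hb⟩ := hF t ht
  exact ⟨b * a, by rw [eval_mul_C_of_semiconjBy F (hst.map φ), ← hb, map_mul]⟩

lemma intValuedRightCoeffs_eq_top (hgen : Subring.closure (Set.center A ∪ {u : A | IsUnit u}) = ⊤)
    (hS : ∀ u : Aˣ, ∀ s ∈ S, (u : A) * s * ((u⁻¹ : Aˣ) : A) ∈ S) :
    φ.intValuedRightCoeffs S = ⊤ := by
  refine top_le_iff.mp (hgen ▸ Subring.closure_le.mpr ?_)
  rintro a (ha | ⟨u, rfl⟩) <;> refine mem_intValuedRightCoeffs_of_semiconjBy fun s hs => ?_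
  · exact ⟨s, hs, (Set.mem_center_iff.mp ha).comm s⟩
  · exact ⟨_, hS u s hs, u.mk_semiconjBy s⟩

lemma mul_mem_intValued (hgen : Subring.closure (Set.center A ∪ {u : A | IsUnit u}) = ⊤)
    (hS : ∀ u : Aˣ, ∀ s ∈ S, (u : A) * s * ((u⁻¹ : Aˣ) : A) ∈ S) {F G : B[X]}
    (hF : F ∈ φ.intValued S) (hG : G ∈ φ.intValued S) : F * G ∈ φ.intValued S := by
  intro s hs
  obtain ⟨a, ha⟩ := hG s hs
  have ha' : a ∈ φ.intValuedRightCoeffs S := by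
    rw [intValuedRightCoeffs_eq_top hgen hS]
    exact Subring.mem_top a
  rw [eval_mul_eq_eval_mul_C_eval, ← ha]
  exact ha' F hF s hs

end RingHom

theorem rightRingset_of_generated_by_units_general
    (D : Type*) [CommRing D]
    (K : Type*) [Field K] [Algebra D K]
    (A : Type*) [Ring A] [Algebra D A]
    (hgen : Subring.closure (Set.center A ∪ {u : A | IsUnit u}) = ⊤)
    (S : Set A) (hS : ∀ u : Aˣ, ∀ s ∈ S, (u : A) * s * ((u⁻¹ : Aˣ) : A) ∈ S) :
    ∀ F ∈ IntRight D K A S, ∀ G ∈ IntRight D K A S, F * G ∈ IntRight D K A S :=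
  fun _ hF _ hG => RingHom.mul_mem_intValued (φ := Algebra.TensorProduct.includeLeftRingHom)
    hgen hS hF hG

/-- If `A` is generated by units as an algebra over its center (every element of `A`
is a finite sum of products of central elements and units of `A`), and `S ⊆ A` is
closed under conjugation by units of `A`, then `Int^r_B(S,A)` is closed under
multiplication, i.e. `S` is a right ringset. -/
theorem rightRingset_of_generated_by_units
    (D : Type*) [CommRing D] [IsDomain D]
    (K : Type*) [Field K] [Algebra D K] [IsFractionRing D K]
    (A : Type*) [Ring A] [Algebra D A] [Module.Finite D A] [NoZeroSMulDivisors D A]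
    (hAK : ∀ b : A ⊗[D] K,
      b ∈ Set.range (Algebra.TensorProduct.includeLeftRingHom (R := D) (A := A) (B := K)) →
      b ∈ Set.range (Algebra.TensorProduct.includeRight (R := D) (A := A) (B := K)) →
      b ∈ Set.range (algebraMap D (A ⊗[D] K)))
    (hgen : Subring.closure (Set.center A ∪ {u : A | IsUnit u}) = ⊤)
    (S : Set A) (hS : ∀ u : Aˣ, ∀ s ∈ S, (u : A) * s * ((u⁻¹ : Aˣ) : A) ∈ S) :
    ∀ F ∈ IntRight D K A S, ∀ G ∈ IntRight D K A S, F * G ∈ IntRight D K A S :=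
  rightRingset_of_generated_by_units_general D K A hgen S hS
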